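/- Let A, B be positive definite n×n complex matrices and X an n×n complex matrix such that the block matrix [[A, X], [X*, B]] is PPT. Then tr(X*X) ≤ tr((A # B)²) ≤ tr(AB) ≤ (1/2)·tr((A+B)²). -/

import Mathlib

open Matrix ComplexOrder
open scoped Classical
open scoped MatrixOrder

/-- The geometric mean `P # Q = P^{1/2} (P^{-1/2} Q P^{-1/2})^{1/2} P^{1/2}` of two
positive definite complex matrices (junk value `0` if `P` or `Q` is not positive definite). -/
noncomputable def geomMean {n : ℕ} (P Q : Matrix (Fin n) (Fin n) ℂ) :
    Matrix (Fin n) (Fin n) ℂ :=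
  if h : P.PosDef ∧ Q.PosDef then
    CFC.sqrt P * CFC.sqrt ((CFC.sqrt P)⁻¹ * Q * (CFC.sqrt P)⁻¹) * CFC.sqrt P
  else 0

variable {n : ℕ}

noncomputable def Matrix.PosSemidef.sqrt {M : Matrix (Fin n) (Fin n) ℂ} (_h : M.PosSemidef) :
    Matrix (Fin n) (Fin n) ℂ := CFC.sqrt M

lemma Matrix.PosSemidef.posSemidef_sqrt {M : Matrix (Fin n) (Fin n) ℂ} (h : M.PosSemidef) :
    h.sqrt.PosSemidef := Matrix.nonneg_iff_posSemidef.mp (CFC.sqrt_nonneg M)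

lemma Matrix.PosSemidef.sqrt_mul_self {M : Matrix (Fin n) (Fin n) ℂ} (h : M.PosSemidef) :
    h.sqrt * h.sqrt = M := CFC.sqrt_mul_sqrt_self M (Matrix.nonneg_iff_posSemidef.mpr h)

lemma psd_trace_nonneg {M : Matrix (Fin n) (Fin n) ℂ} (h : M.PosSemidef) : 0 ≤ M.trace := by
  exact h.trace_nonneg

lemma psd_conj_sub {S T Z : Matrix (Fin n) (Fin n) ℂ} (h : (T - S).PosSemidef) :
    (Zᴴ * T * Z - Zᴴ * S * Z).PosSemidef := by
  have h2 := h.conjTranspose_mul_mul_same Z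
  have : Zᴴ * (T - S) * Z = Zᴴ * T * Z - Zᴴ * S * Z := by noncomm_ring
  rwa [this] at h2

lemma psd_mul_trace_nonneg {S T : Matrix (Fin n) (Fin n) ℂ} (hS : S.PosSemidef)
    (hT : T.PosSemidef) : 0 ≤ (S * T).trace := by
  have h2 := hT.conjTranspose_mul_mul_same hS.sqrt
  rw [hS.posSemidef_sqrt.1.eq] at h2
  have h3 : (S * T).trace = (hS.sqrt * T * hS.sqrt).trace := by
    conv_lhs => rw [← hS.sqrt_mul_self]
    rw [Matrix.mul_assoc, Matrix.trace_mul_comm]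
  rw [h3]
  exact psd_trace_nonneg h2

/-- if T - S psd and both "hermitian", weighted trace monotone -/
lemma trace_mono_weight {S T W : Matrix (Fin n) (Fin n) ℂ} (h : (T - S).PosSemidef)
    (hW : W.PosSemidef) : (S * W).trace ≤ (T * W).trace := by
  have := psd_mul_trace_nonneg h hW
  rw [Matrix.sub_mul, Matrix.trace_sub, le_sub_iff_add_le, zero_add] at this
  exact this


-- contraction bound: if 1 - PᴴP psd then ‖(P *ᵥ w)‖ ≤ ‖w‖ in euclidean norm
lemma contraction_bound {P : Matrix (Fin n) (Fin n) ℂ} (hP : (1 - Pᴴ * P).PosSemidef)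
    (w : Fin n → ℂ) :
    ‖((WithLp.equiv 2 _).symm (P *ᵥ w) : EuclideanSpace ℂ (Fin n))‖
      ≤ ‖((WithLp.equiv 2 _).symm w : EuclideanSpace ℂ (Fin n))‖ := by
  set W : EuclideanSpace ℂ (Fin n) := (WithLp.equiv 2 _).symm w with hW
  set PW : EuclideanSpace ℂ (Fin n) := (WithLp.equiv 2 _).symm (P *ᵥ w) with hPW
  have h0 := hP.dotProduct_mulVec_nonneg w
  have h1 : star w ⬝ᵥ ((1 - Pᴴ * P) *ᵥ w)
      = (star w ⬝ᵥ w) - (star (P *ᵥ w) ⬝ᵥ (P *ᵥ w)) := by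
    rw [Matrix.sub_mulVec, dotProduct_sub, Matrix.one_mulVec]
    congr 1
    rw [Matrix.star_mulVec, ← Matrix.dotProduct_mulVec, Matrix.mulVec_mulVec]
  rw [h1] at h0
  have h2 : (star (P *ᵥ w) ⬝ᵥ (P *ᵥ w)) ≤ (star w ⬝ᵥ w) := sub_nonneg.mp h0
  have e1 : star (P *ᵥ w) ⬝ᵥ (P *ᵥ w) = ((‖PW‖ : ℂ))^2 := by
    rw [dotProduct_comm, ← EuclideanSpace.inner_toLp_toLp, inner_self_eq_norm_sq_to_K]; rfl
  have e2 : star w ⬝ᵥ w = ((‖W‖ : ℂ))^2 := by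
    rw [dotProduct_comm, ← EuclideanSpace.inner_toLp_toLp, inner_self_eq_norm_sq_to_K]; rfl
  rw [e1, e2] at h2
  have h3 : ‖PW‖^2 ≤ ‖W‖^2 := by
    rw [← Complex.ofReal_pow, ← Complex.ofReal_pow, Complex.real_le_real] at h2
    exact h2
  nlinarith [norm_nonneg PW, norm_nonneg W]

lemma psd_le_one {M : Matrix (Fin n) (Fin n) ℂ} (hMpsd : M.PosSemidef)
    (heig : ∀ i, hMpsd.1.eigenvalues i ≤ 1) : (1 - M).PosSemidef := by
  set U : Matrix (Fin n) (Fin n) ℂ := (hMpsd.1.eigenvectorUnitary : Matrix (Fin n) (Fin n) ℂ)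
  have hU : U * (star U) = 1 := (Matrix.mem_unitaryGroup_iff).mp hMpsd.1.eigenvectorUnitary.2
  have hdiag : (1 : Matrix (Fin n) (Fin n) ℂ) - M
      = U * (1 - diagonal (RCLike.ofReal ∘ hMpsd.1.eigenvalues)) * (star U) := by
    rw [Matrix.mul_sub, Matrix.sub_mul, Matrix.mul_one, hU]
    congr 1
    exact hMpsd.1.spectral_theorem
  rw [hdiag]
  have hpsd : ((1 : Matrix (Fin n) (Fin n) ℂ) - diagonal (RCLike.ofReal ∘ hMpsd.1.eigenvalues)).PosSemidef := by
    rw [← Matrix.diagonal_one, Matrix.diagonal_sub]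
    refine Matrix.posSemidef_diagonal_iff.mpr fun i => ?_
    have h1 := heig i
    simp only [Pi.sub_apply, Pi.one_apply, Function.comp_apply]
    rw [Complex.nonneg_iff]
    constructor
    · simp only [Complex.sub_re, Complex.one_re, RCLike.ofReal_re]
      simpa using h1
    · simp
  have := hpsd.mul_mul_conjTranspose_same U
  rwa [← Matrix.star_eq_conjTranspose] at this




section facts
variable {M : Matrix (Fin n) (Fin n) ℂ} (hM : M.PosSemidef) (hdet : M.det ≠ 0)

lemma sqrt_herm : (hM.sqrt)ᴴ = hM.sqrt := hM.posSemidef_sqrt.1.eq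

include hdet in
lemma sqrt_det_isUnit : IsUnit hM.sqrt.det := by
  have h : hM.sqrt.det * hM.sqrt.det = M.det := by rw [← Matrix.det_mul, hM.sqrt_mul_self]
  refine isUnit_iff_ne_zero.mpr fun h0 => hdet ?_
  rw [← h, h0, zero_mul]

include hdet in
lemma sqrt_mul_inv : hM.sqrt * hM.sqrt⁻¹ = 1 :=
  Matrix.mul_nonsing_inv _ (sqrt_det_isUnit hM hdet)

include hdet in
lemma sqrt_inv_mul : hM.sqrt⁻¹ * hM.sqrt = 1 :=
  Matrix.nonsing_inv_mul _ (sqrt_det_isUnit hM hdet)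

lemma sqrt_inv_herm : (hM.sqrt⁻¹)ᴴ = hM.sqrt⁻¹ := by
  rw [Matrix.conjTranspose_nonsing_inv, sqrt_herm]

omit hdet in
lemma sqrt_inv_mul_inv : hM.sqrt⁻¹ * hM.sqrt⁻¹ = M⁻¹ := by
  rw [← Matrix.mul_inv_rev, hM.sqrt_mul_self]

end facts

section key
variable {A B X : Matrix (Fin n) (Fin n) ℂ}

lemma hs_psd (hA : A.PosDef) (hB : B.PosDef) :
    ((hA.posSemidef.sqrt⁻¹) * B * (hA.posSemidef.sqrt⁻¹)).PosSemidef := by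
  have h1 := hB.posSemidef.conjTranspose_mul_mul_same (hA.posSemidef.sqrt⁻¹)
  rwa [Matrix.conjTranspose_nonsing_inv, hA.posSemidef.posSemidef_sqrt.1.eq] at h1

lemma geomMean_eq (hA : A.PosDef) (hB : B.PosDef) :
    geomMean A B = hA.posSemidef.sqrt * (hs_psd hA hB).sqrt * hA.posSemidef.sqrt := by
  rw [geomMean, dif_pos ⟨hA, hB⟩]; rfl

set_option maxHeartbeats 1000000 in
lemma key_psd (hA : A.PosDef) (hB : B.PosDef)
    (h1 : (B - Xᴴ * A⁻¹ * X).PosSemidef) (h4 : (A - Xᴴ * B⁻¹ * X).PosSemidef) :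
    (geomMean A B - Xᴴ * (geomMean A B)⁻¹ * X).PosSemidef := by
  set A1 := hA.posSemidef.sqrt with hA1def
  have hsB : (A1⁻¹ * B * A1⁻¹).PosSemidef := hs_psd hA hB
  set D := hsB.sqrt with hDdef
  set E := hsB.posSemidef_sqrt.sqrt with hEdef
  -- determinants
  have hdetA : A.det ≠ 0 := hA.det_pos.ne'
  have hdetA1 : IsUnit A1.det := sqrt_det_isUnit hA.posSemidef hdetA
  have hA1H : A1ᴴ = A1 := sqrt_herm hA.posSemidef
  have hA1i : A1 * A1⁻¹ = 1 := sqrt_mul_inv hA.posSemidef hdetA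
  have hA1i' : A1⁻¹ * A1 = 1 := sqrt_inv_mul hA.posSemidef hdetA
  have hA1iH : (A1⁻¹)ᴴ = A1⁻¹ := sqrt_inv_herm hA.posSemidef
  have hAinv : A⁻¹ = A1⁻¹ * A1⁻¹ := (sqrt_inv_mul_inv hA.posSemidef).symm
  have hAeq : A = A1 * A1 := (hA.posSemidef.sqrt_mul_self).symm
  have hdetB0 : (A1⁻¹ * B * A1⁻¹).det ≠ 0 := by
    have hdetiA1 : A1⁻¹.det ≠ 0 := by
      have h2 : A1⁻¹.det * A1.det = 1 := by rw [← Matrix.det_mul, hA1i', Matrix.det_one]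
      intro h0
      rw [h0, zero_mul] at h2
      exact zero_ne_one h2
    simp only [Matrix.det_mul]
    exact mul_ne_zero (mul_ne_zero hdetiA1 hB.det_pos.ne') hdetiA1
  have hDD : D * D = A1⁻¹ * B * A1⁻¹ := hsB.sqrt_mul_self
  have hdetD : D.det ≠ 0 := by
    intro h0
    apply hdetB0
    rw [← hDD, Matrix.det_mul, h0, zero_mul]
  have hDH : Dᴴ = D := sqrt_herm hsB
  have hDi : D * D⁻¹ = 1 := sqrt_mul_inv hsB hdetB0
  have hDi' : D⁻¹ * D = 1 := sqrt_inv_mul hsB hdetB0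
  have hDiH : (D⁻¹)ᴴ = D⁻¹ := sqrt_inv_herm hsB
  have hEE : E * E = D := hsB.posSemidef_sqrt.sqrt_mul_self
  have hEH : Eᴴ = E := sqrt_herm hsB.posSemidef_sqrt
  have hEi : E * E⁻¹ = 1 := sqrt_mul_inv hsB.posSemidef_sqrt hdetD
  have hEi' : E⁻¹ * E = 1 := sqrt_inv_mul hsB.posSemidef_sqrt hdetD
  have hEiH : (E⁻¹)ᴴ = E⁻¹ := sqrt_inv_herm hsB.posSemidef_sqrt
  have hDinv : D⁻¹ = E⁻¹ * E⁻¹ := by rw [← Matrix.mul_inv_rev, hEE]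
  -- cancellation helpers
  have cA1 : ∀ Z : Matrix (Fin n) (Fin n) ℂ, A1 * (A1⁻¹ * Z) = Z := fun Z => by
    rw [← Matrix.mul_assoc, hA1i, Matrix.one_mul]
  have cA1' : ∀ Z : Matrix (Fin n) (Fin n) ℂ, A1⁻¹ * (A1 * Z) = Z := fun Z => by
    rw [← Matrix.mul_assoc, hA1i', Matrix.one_mul]
  have cD : ∀ Z : Matrix (Fin n) (Fin n) ℂ, D * (D⁻¹ * Z) = Z := fun Z => by
    rw [← Matrix.mul_assoc, hDi, Matrix.one_mul]
  have cD' : ∀ Z : Matrix (Fin n) (Fin n) ℂ, D⁻¹ * (D * Z) = Z := fun Z => by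
    rw [← Matrix.mul_assoc, hDi', Matrix.one_mul]
  have cE : ∀ Z : Matrix (Fin n) (Fin n) ℂ, E * (E⁻¹ * Z) = Z := fun Z => by
    rw [← Matrix.mul_assoc, hEi, Matrix.one_mul]
  have cE' : ∀ Z : Matrix (Fin n) (Fin n) ℂ, E⁻¹ * (E * Z) = Z := fun Z => by
    rw [← Matrix.mul_assoc, hEi', Matrix.one_mul]
  have hBeq : B = A1 * (D * D) * A1 := by
    rw [hDD, Matrix.mul_assoc A1⁻¹ B A1⁻¹, cA1 (B * A1⁻¹), Matrix.mul_assoc B, hA1i',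
      Matrix.mul_one]
  have hBinv : B⁻¹ = A1⁻¹ * (D⁻¹ * (D⁻¹ * A1⁻¹)) := by
    rw [hBeq, Matrix.mul_inv_rev, Matrix.mul_inv_rev, Matrix.mul_inv_rev, Matrix.mul_assoc D⁻¹]
  set X0 := A1⁻¹ * X * A1⁻¹ with hX0def
  -- hypothesis transformations
  have hXX : (D * D - X0ᴴ * X0).PosSemidef := by
    have h := psd_conj_sub (Z := A1⁻¹) h1
    have e1 : (A1⁻¹)ᴴ * B * A1⁻¹ = D * D := by rw [hA1iH, hDD]
    have e2 : (A1⁻¹)ᴴ * (Xᴴ * A⁻¹ * X) * A1⁻¹ = X0ᴴ * X0 := by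
      simp only [hX0def, Matrix.conjTranspose_mul, hA1iH, hAinv, Matrix.mul_assoc]
    rwa [e1, e2] at h
  have hXDX : ((1 : Matrix (Fin n) (Fin n) ℂ) - X0ᴴ * (D⁻¹ * (D⁻¹ * X0))).PosSemidef := by
    have h := psd_conj_sub (Z := A1⁻¹) h4
    have e1 : (A1⁻¹)ᴴ * A * A1⁻¹ = 1 := by
      rw [hA1iH, hAeq, cA1' A1, hA1i]
    have e2 : (A1⁻¹)ᴴ * (Xᴴ * B⁻¹ * X) * A1⁻¹ = X0ᴴ * (D⁻¹ * (D⁻¹ * X0)) := by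
      simp only [hX0def, Matrix.conjTranspose_mul, hA1iH, hBinv, Matrix.mul_assoc, cA1]
    rwa [e1, e2] at h
  set P := D⁻¹ * X0 with hPdef
  set Q := X0 * D⁻¹ with hQdef
  have hP : ((1 : Matrix (Fin n) (Fin n) ℂ) - Pᴴ * P).PosSemidef := by
    have e : Pᴴ * P = X0ᴴ * (D⁻¹ * (D⁻¹ * X0)) := by
      simp only [hPdef, Matrix.conjTranspose_mul, hDiH, Matrix.mul_assoc]
    rwa [← e] at hXDX
  have hQ : ((1 : Matrix (Fin n) (Fin n) ℂ) - Qᴴ * Q).PosSemidef := by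
    have h := psd_conj_sub (Z := D⁻¹) hXX
    have e1 : (D⁻¹)ᴴ * (D * D) * D⁻¹ = 1 := by rw [hDiH, cD' D, hDi]
    have e2 : (D⁻¹)ᴴ * (X0ᴴ * X0) * D⁻¹ = Qᴴ * Q := by
      simp only [hQdef, Matrix.conjTranspose_mul, hDiH, Matrix.mul_assoc]
    rwa [e1, e2] at h
  set Y := E⁻¹ * X0 * E⁻¹ with hYdef
  set M := Yᴴ * Y with hMdef
  have hMpsd : M.PosSemidef := Matrix.posSemidef_conjTranspose_mul_self Y
  have hMsim : M = E * (Qᴴ * P) * E⁻¹ := by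
    simp only [hMdef, hYdef, hPdef, hQdef, Matrix.conjTranspose_mul, hDiH, hEiH, hDinv,
      Matrix.mul_assoc, cE, cE']
  have heig : ∀ i, hMpsd.1.eigenvalues i ≤ 1 := by
    intro i
    set lam := hMpsd.1.eigenvalues i with hlamdef
    have hlam0 : 0 ≤ lam := hMpsd.eigenvalues_nonneg i
    set v : Fin n → ℂ := ⇑(hMpsd.1.eigenvectorBasis i) with hvdef
    have hv : M *ᵥ v = (lam : ℂ) • v := by
      have h := hMpsd.1.mulVec_eigenvectorBasis i
      rw [← hvdef, ← hlamdef] at h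
      rw [h]
      ext j
      simp [Complex.real_smul]
    have hvne : v ≠ 0 := by
      intro h0
      apply hMpsd.1.eigenvectorBasis.orthonormal.ne_zero i
      ext j
      exact congr_fun h0 j
    set w := E⁻¹ *ᵥ v with hwdef
    have hvw : v = E *ᵥ w := by
      rw [hwdef, Matrix.mulVec_mulVec, hEi, Matrix.one_mulVec]
    have hwne : w ≠ 0 := by
      intro h0
      apply hvne
      rw [hvw, h0, Matrix.mulVec_zero]
    have hQP : (Qᴴ * P) *ᵥ w = (lam : ℂ) • w := by
      have h2 : E⁻¹ * M = (Qᴴ * P) * E⁻¹ := by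
        rw [hMsim, ← Matrix.mul_assoc, ← Matrix.mul_assoc, hEi', Matrix.one_mul]
      calc (Qᴴ * P) *ᵥ w = ((Qᴴ * P) * E⁻¹) *ᵥ v := by rw [hwdef, Matrix.mulVec_mulVec]
        _ = (E⁻¹ * M) *ᵥ v := by rw [h2]
        _ = E⁻¹ *ᵥ (M *ᵥ v) := by rw [Matrix.mulVec_mulVec]
        _ = (lam : ℂ) • w := by rw [hv, Matrix.mulVec_smul, hwdef]
    -- dot product identity
    have hdot : (lam : ℂ) * (star w ⬝ᵥ w) = star (Q *ᵥ w) ⬝ᵥ (P *ᵥ w) := by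
      conv_rhs => rw [Matrix.star_mulVec, ← Matrix.dotProduct_mulVec, Matrix.mulVec_mulVec, hQP]
      rw [dotProduct_smul]
      simp [smul_eq_mul]
    set W : EuclideanSpace ℂ (Fin n) := (WithLp.equiv 2 _).symm w with hWdef
    have hnw : star w ⬝ᵥ w = ((‖W‖ : ℂ))^2 := by
      rw [dotProduct_comm, ← EuclideanSpace.inner_toLp_toLp, inner_self_eq_norm_sq_to_K]; rfl
    have hWne : ‖W‖ ≠ 0 := by
      simp only [norm_ne_zero_iff]
      intro h0
      apply hwne
      ext j
      exact congr_fun (congrArg (WithLp.equiv 2 _) h0) j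
    have hrhs : ‖star (Q *ᵥ w) ⬝ᵥ (P *ᵥ w)‖ ≤ ‖W‖ * ‖W‖ := by
      rw [dotProduct_comm, ← EuclideanSpace.inner_toLp_toLp]
      refine le_trans (norm_inner_le_norm _ _) ?_
      exact mul_le_mul (contraction_bound hQ w) (contraction_bound hP w)
        (norm_nonneg _) (norm_nonneg _)
    have hlhs : ‖(lam : ℂ) * (star w ⬝ᵥ w)‖ = lam * (‖W‖^2) := by
      rw [hnw, norm_mul]
      simp [abs_of_nonneg hlam0]
    rw [hdot] at hlhs
    have hfin : lam * (‖W‖^2) ≤ ‖W‖ * ‖W‖ := hlhs ▸ hrhs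
    have hW2 : 0 < ‖W‖ := lt_of_le_of_ne (norm_nonneg _) (Ne.symm hWne)
    rw [pow_two] at hfin
    have hs : 0 < ‖W‖ * ‖W‖ := mul_pos hW2 hW2
    exact le_of_mul_le_mul_right (by linarith) hs
  have hle1 := psd_le_one hMpsd heig
  -- conjugate back by E
  have s1 : (D - X0ᴴ * (D⁻¹ * X0)).PosSemidef := by
    have h := psd_conj_sub (Z := E) hle1
    have e1 : Eᴴ * 1 * E = D := by rw [hEH, Matrix.mul_one, hEE]
    have e2 : Eᴴ * M * E = X0ᴴ * (D⁻¹ * X0) := by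
      simp only [hMdef, hYdef, Matrix.conjTranspose_mul, hEH, hEiH, hDinv,
        Matrix.mul_assoc, cE, cE', hEi', Matrix.mul_one]
    rwa [e1, e2] at h
  -- conjugate back by A1
  have s2 := psd_conj_sub (Z := A1) s1
  have e1 : A1ᴴ * D * A1 = geomMean A B := by rw [hA1H, geomMean_eq hA hB]
  have e2 : A1ᴴ * (X0ᴴ * (D⁻¹ * X0)) * A1 = Xᴴ * (geomMean A B)⁻¹ * X := by
    have hGinv : (geomMean A B)⁻¹ = A1⁻¹ * (D⁻¹ * A1⁻¹) := by
      rw [geomMean_eq hA hB, Matrix.mul_inv_rev, Matrix.mul_inv_rev]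
    simp only [hX0def, hGinv, Matrix.conjTranspose_mul, hA1H, hA1iH, Matrix.mul_assoc, cA1, cA1',
      hA1i', Matrix.mul_one]
  rwa [e1, e2] at s2
end key

lemma half_nonneg_c {z : ℂ} (h : 0 ≤ z + z) : 0 ≤ z := by
  rw [Complex.nonneg_iff] at *
  simp only [Complex.add_re, Complex.add_im] at h
  obtain ⟨h1, h2⟩ := h
  constructor
  · linarith
  · linarith

set_option maxHeartbeats 1600000 in
theorem stmt15 {n : ℕ} (A B X : Matrix (Fin n) (Fin n) ℂ)
    (hA : A.PosDef) (hB : B.PosDef)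
    (hH : (Matrix.fromBlocks A X Xᴴ B).PosSemidef)
    (hτ : (Matrix.fromBlocks A Xᴴ X B).PosSemidef) :
    (Xᴴ * X).trace ≤ (geomMean A B * geomMean A B).trace ∧
      (geomMean A B * geomMean A B).trace ≤ (A * B).trace ∧
      (A * B).trace ≤ (2 : ℂ)⁻¹ * ((A + B) * (A + B)).trace := by
  have hdetA : A.det ≠ 0 := hA.det_pos.ne'
  have hdetB : B.det ≠ 0 := hB.det_pos.ne'
  letI : Invertible A := A.invertibleOfIsUnitDet hdetA.isUnit
  letI : Invertible B := B.invertibleOfIsUnitDet hdetB.isUnit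
  -- Schur complements
  have hτ' : (Matrix.fromBlocks A Xᴴ (Xᴴ)ᴴ B).PosSemidef := by
    rwa [conjTranspose_conjTranspose]
  have h1 : (B - Xᴴ * A⁻¹ * X).PosSemidef :=
    (Matrix.PosDef.fromBlocks₁₁ X B hA).mp hH
  have h3 : (A - X * B⁻¹ * Xᴴ).PosSemidef :=
    (Matrix.PosDef.fromBlocks₂₂ A X hB).mp hH
  have h2 : (B - (Xᴴ)ᴴ * A⁻¹ * Xᴴ).PosSemidef :=
    (Matrix.PosDef.fromBlocks₁₁ Xᴴ B hA).mp hτ'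
  have h4 : (A - Xᴴ * B⁻¹ * (Xᴴ)ᴴ).PosSemidef :=
    (Matrix.PosDef.fromBlocks₂₂ A Xᴴ hB).mp hτ'
  rw [conjTranspose_conjTranspose] at h4
  have h3' : (A - (Xᴴ)ᴴ * B⁻¹ * Xᴴ).PosSemidef := by
    rwa [conjTranspose_conjTranspose]
  -- key PSD facts
  have key1 : (geomMean A B - Xᴴ * (geomMean A B)⁻¹ * X).PosSemidef := key_psd hA hB h1 h4
  have key2 : (geomMean A B - X * (geomMean A B)⁻¹ * Xᴴ).PosSemidef := by
    have := key_psd (X := Xᴴ) hA hB h2 h3'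
    rwa [conjTranspose_conjTranspose] at this
  -- setup square roots as in key_psd
  set A1 := hA.posSemidef.sqrt with hA1def
  have hsB : (A1⁻¹ * B * A1⁻¹).PosSemidef := hs_psd hA hB
  set D := hsB.sqrt with hDdef
  have hdetA1 : IsUnit A1.det := sqrt_det_isUnit hA.posSemidef hdetA
  have hA1H : A1ᴴ = A1 := sqrt_herm hA.posSemidef
  have hA1i : A1 * A1⁻¹ = 1 := sqrt_mul_inv hA.posSemidef hdetA
  have hA1i' : A1⁻¹ * A1 = 1 := sqrt_inv_mul hA.posSemidef hdetA
  have hAeq : A = A1 * A1 := (hA.posSemidef.sqrt_mul_self).symm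
  have hdetB0 : (A1⁻¹ * B * A1⁻¹).det ≠ 0 := by
    have hdetiA1 : A1⁻¹.det ≠ 0 := by
      have h2' : A1⁻¹.det * A1.det = 1 := by rw [← Matrix.det_mul, hA1i', Matrix.det_one]
      intro h0
      rw [h0, zero_mul] at h2'
      exact zero_ne_one h2'
    simp only [Matrix.det_mul]
    exact mul_ne_zero (mul_ne_zero hdetiA1 hdetB) hdetiA1
  have hDD : D * D = A1⁻¹ * B * A1⁻¹ := hsB.sqrt_mul_self
  have hdetD : D.det ≠ 0 := by
    intro h0
    apply hdetB0
    rw [← hDD, Matrix.det_mul, h0, zero_mul]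
  have hDH : Dᴴ = D := sqrt_herm hsB
  have cA1 : ∀ Z : Matrix (Fin n) (Fin n) ℂ, A1 * (A1⁻¹ * Z) = Z := fun Z => by
    rw [← Matrix.mul_assoc, hA1i, Matrix.one_mul]
  have cA1' : ∀ Z : Matrix (Fin n) (Fin n) ℂ, A1⁻¹ * (A1 * Z) = Z := fun Z => by
    rw [← Matrix.mul_assoc, hA1i', Matrix.one_mul]
  have mA1 : ∀ Z : Matrix (Fin n) (Fin n) ℂ, A1 * (A1 * Z) = A * Z := fun Z => by
    rw [← Matrix.mul_assoc, ← hAeq]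
  have mA1A : ∀ Z : Matrix (Fin n) (Fin n) ℂ, A1 * (A * Z) = A * (A1 * Z) := fun Z => by
    rw [hAeq]
    simp only [Matrix.mul_assoc]
  have hBeq : B = A1 * (D * D) * A1 := by
    rw [hDD, Matrix.mul_assoc A1⁻¹ B A1⁻¹, cA1 (B * A1⁻¹), Matrix.mul_assoc B, hA1i',
      Matrix.mul_one]
  have hGeq : geomMean A B = A1 * D * A1 := geomMean_eq hA hB
  -- canonical traces
  set c1 := (A * (A * (D * D))).trace with hc1def
  set c2 := (D * (A * (D * A))).trace with hc2def
  have eG : (geomMean A B * geomMean A B).trace = c2 := by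
    have e : geomMean A B * geomMean A B = A1 * (D * (A * (D * A1))) := by
      rw [hGeq]; simp only [Matrix.mul_assoc, mA1]
    rw [e, Matrix.trace_mul_comm A1 (D * (A * (D * A1)))]
    congr 1
    simp only [Matrix.mul_assoc, ← hAeq]
  have eAB : (A * B).trace = c1 := by
    have e : A * B = (A * (A1 * (D * D))) * A1 := by
      rw [hBeq]; simp only [Matrix.mul_assoc]
    rw [e, Matrix.trace_mul_comm]
    congr 1
    rw [mA1A, mA1]
  set N := D * A - A * D with hNdef
  have hNH : Nᴴ = A * D - D * A := by
    rw [hNdef, conjTranspose_sub, conjTranspose_mul, conjTranspose_mul, hA.1.eq, hDH]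
  have em : N * Nᴴ = (D*A)*(A*D) - (D*A)*(D*A) - ((A*D)*(A*D) - (A*D)*(D*A)) := by
    rw [hNH, hNdef]; noncomm_ring
  have tm1 : ((D*A)*(A*D)).trace = c1 := by
    rw [show (D*A)*(A*D) = (D*(A*A))*D from by simp only [Matrix.mul_assoc],
      Matrix.trace_mul_comm,
      show D*(D*(A*A)) = (D*D)*(A*A) from by simp only [Matrix.mul_assoc],
      Matrix.trace_mul_comm]
    congr 1
    simp only [Matrix.mul_assoc]
  have tm2 : ((D*A)*(D*A)).trace = c2 := by
    congr 1
    simp only [Matrix.mul_assoc]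
  have tm3 : ((A*D)*(A*D)).trace = c2 := by
    rw [show (A*D)*(A*D) = (A*(D*A))*D from by simp only [Matrix.mul_assoc],
      Matrix.trace_mul_comm]
  have tm4 : ((A*D)*(D*A)).trace = c1 := by
    rw [show (A*D)*(D*A) = (A*(D*D))*A from by simp only [Matrix.mul_assoc],
      Matrix.trace_mul_comm]
  have eNN : (N * Nᴴ).trace = (c1 - c2) + (c1 - c2) := by
    rw [em, Matrix.trace_sub, Matrix.trace_sub, Matrix.trace_sub, tm1, tm2, tm3, tm4]
    ring
  have hNN := psd_trace_nonneg (Matrix.posSemidef_self_mul_conjTranspose N)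
  rw [eNN] at hNN
  have h12 : 0 ≤ c1 - c2 := half_nonneg_c hNN
  have part2 : (geomMean A B * geomMean A B).trace ≤ (A * B).trace := by
    rw [eG, eAB]; exact sub_nonneg.mp h12
  -- part 3
  have hAA : 0 ≤ (A * A).trace := by
    have h := psd_trace_nonneg (Matrix.posSemidef_conjTranspose_mul_self A)
    rwa [hA.1.eq] at h
  have hBB : 0 ≤ (B * B).trace := by
    have h := psd_trace_nonneg (Matrix.posSemidef_conjTranspose_mul_self B)
    rwa [hB.1.eq] at h
  have part3 : (A * B).trace ≤ (2 : ℂ)⁻¹ * ((A + B) * (A + B)).trace := by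
    have hexp3 : ((A + B) * (A + B)).trace
        = (A*A).trace + (B*B).trace + ((A*B).trace + (A*B).trace) := by
      have e : (A + B) * (A + B) = A*A + A*B + (B*A + B*B) := by noncomm_ring
      rw [e, Matrix.trace_add, Matrix.trace_add, Matrix.trace_add, Matrix.trace_mul_comm B A]
      ring
    rw [hexp3]
    have hhalf : (0:ℂ) ≤ (2:ℂ)⁻¹ := by
      rw [Complex.nonneg_iff]; norm_num
    have e2 : (2:ℂ)⁻¹ * ((A*A).trace + (B*B).trace + ((A*B).trace + (A*B).trace))
        = (2:ℂ)⁻¹ * ((A*A).trace + (B*B).trace) + (A*B).trace := by ring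
    rw [e2]
    exact le_add_of_nonneg_left (mul_nonneg hhalf (add_nonneg hAA hBB))
  -- part 1
  have hGpsd : (geomMean A B).PosSemidef := by
    have h := hsB.posSemidef_sqrt.mul_mul_conjTranspose_same A1
    rw [hA1H, ← hGeq] at h
    exact h
  have hdetG : (geomMean A B).det ≠ 0 := by
    rw [hGeq]
    simp only [Matrix.det_mul]
    intro h0
    rcases mul_eq_zero.mp h0 with h0 | h0
    · rcases mul_eq_zero.mp h0 with h0 | h0
      · exact hdetA1.ne_zero h0
      · exact hdetD h0
    · exact hdetA1.ne_zero h0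
  set G1 := hGpsd.sqrt with hG1def
  have hG1H : G1ᴴ = G1 := sqrt_herm hGpsd
  have hG1i : G1 * G1⁻¹ = 1 := sqrt_mul_inv hGpsd hdetG
  have hG1i' : G1⁻¹ * G1 = 1 := sqrt_inv_mul hGpsd hdetG
  have hG1iH : (G1⁻¹)ᴴ = G1⁻¹ := sqrt_inv_herm hGpsd
  have hG1G : G1 * G1 = geomMean A B := hGpsd.sqrt_mul_self
  have cG : ∀ Z : Matrix (Fin n) (Fin n) ℂ, G1 * (G1⁻¹ * Z) = Z := fun Z => by
    rw [← Matrix.mul_assoc, hG1i, Matrix.one_mul]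
  have mG : ∀ Z : Matrix (Fin n) (Fin n) ℂ, G1 * (G1 * Z) = geomMean A B * Z := fun Z => by
    rw [← Matrix.mul_assoc, hG1G]
  have miG : ∀ Z : Matrix (Fin n) (Fin n) ℂ, G1⁻¹ * (G1⁻¹ * Z) = (geomMean A B)⁻¹ * Z :=
    fun Z => by rw [← Matrix.mul_assoc, sqrt_inv_mul_inv hGpsd]
  have hGinv2 : G1⁻¹ * G1⁻¹ = (geomMean A B)⁻¹ := sqrt_inv_mul_inv hGpsd
  set P := G1⁻¹ * (X * G1) with hPdef
  set Q := G1⁻¹ * (Xᴴ * G1) with hQdef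
  have hexp1 := psd_trace_nonneg (Matrix.posSemidef_self_mul_conjTranspose (Pᴴ - Q))
  have em1 : (Pᴴ - Q) * (Pᴴ - Q)ᴴ = Pᴴ*P - Pᴴ*Qᴴ - (Q*P - Q*Qᴴ) := by
    rw [conjTranspose_sub, conjTranspose_conjTranspose]; noncomm_ring
  have tQP : (Q*P).trace = (Xᴴ * X).trace := by
    have e : Q * P = G1⁻¹ * ((Xᴴ * (X * G1))) := by
      rw [hPdef, hQdef]
      simp only [Matrix.mul_assoc, cG]
    rw [e, Matrix.trace_mul_comm]
    congr 1
    simp only [Matrix.mul_assoc, hG1i, Matrix.mul_one]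
  have tPQ : (Pᴴ*Qᴴ).trace = (Xᴴ * X).trace := by
    rw [show Pᴴ*Qᴴ = (Q*P)ᴴ from (conjTranspose_mul Q P).symm, Matrix.trace_conjTranspose, tQP,
      ← Matrix.trace_conjTranspose, conjTranspose_mul, conjTranspose_conjTranspose]
  have tPP : (Pᴴ*P).trace = ((Xᴴ * ((geomMean A B)⁻¹ * X)) * geomMean A B).trace := by
    have e : Pᴴ*P = G1 * (Xᴴ * ((geomMean A B)⁻¹ * (X * G1))) := by
      rw [hPdef]
      simp only [conjTranspose_mul, hG1H, hG1iH, Matrix.mul_assoc, miG]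
    rw [e, Matrix.trace_mul_comm]
    congr 1
    simp only [Matrix.mul_assoc, hG1G]
  have tQQ : (Q*Qᴴ).trace = ((X * ((geomMean A B)⁻¹ * Xᴴ)) * geomMean A B).trace := by
    have e : Q*Qᴴ = G1⁻¹ * (Xᴴ * (geomMean A B * (X * G1⁻¹))) := by
      rw [hQdef]
      simp only [conjTranspose_mul, conjTranspose_conjTranspose, hG1H, hG1iH, Matrix.mul_assoc, mG]
    rw [e, Matrix.trace_mul_comm]
    rw [show (Xᴴ * (geomMean A B * (X * G1⁻¹))) * G1⁻¹
        = Xᴴ * (geomMean A B * (X * (geomMean A B)⁻¹)) from by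
      simp only [Matrix.mul_assoc, hGinv2]]
    rw [Matrix.trace_mul_comm Xᴴ]
    rw [show (geomMean A B * (X * (geomMean A B)⁻¹)) * Xᴴ
        = geomMean A B * ((X * ((geomMean A B)⁻¹ * Xᴴ))) from by simp only [Matrix.mul_assoc]]
    rw [Matrix.trace_mul_comm]
  have key1' : (geomMean A B - Xᴴ * ((geomMean A B)⁻¹ * X)).PosSemidef := by
    rwa [← Matrix.mul_assoc]
  have key2' : (geomMean A B - X * ((geomMean A B)⁻¹ * Xᴴ)).PosSemidef := by
    rwa [← Matrix.mul_assoc]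
  have b1 : ((Xᴴ * ((geomMean A B)⁻¹ * X)) * geomMean A B).trace
      ≤ (geomMean A B * geomMean A B).trace := trace_mono_weight key1' hGpsd
  have b2 : ((X * ((geomMean A B)⁻¹ * Xᴴ)) * geomMean A B).trace
      ≤ (geomMean A B * geomMean A B).trace := trace_mono_weight key2' hGpsd
  have htr : ((Pᴴ - Q) * (Pᴴ - Q)ᴴ).trace
      = ((Xᴴ * ((geomMean A B)⁻¹ * X)) * geomMean A B).trace
        + ((X * ((geomMean A B)⁻¹ * Xᴴ)) * geomMean A B).trace
        - (Xᴴ * X).trace - (Xᴴ * X).trace := by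
    rw [em1, Matrix.trace_sub, Matrix.trace_sub, Matrix.trace_sub, tQP, tPQ, tPP, tQQ]
    ring
  have part1 : (Xᴴ * X).trace ≤ (geomMean A B * geomMean A B).trace := by
    set a := ((Xᴴ * ((geomMean A B)⁻¹ * X)) * geomMean A B).trace
    set b := ((X * ((geomMean A B)⁻¹ * Xᴴ)) * geomMean A B).trace
    set c := (Xᴴ * X).trace
    set g := (geomMean A B * geomMean A B).trace
    rw [htr] at hexp1
    have h5 : c + c ≤ a + b := by
      rw [show a + b - c - c = (a + b) - (c + c) from by ring] at hexp1
      exact sub_nonneg.mp hexp1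
    have h6 : a + b ≤ g + g := add_le_add b1 b2
    have h7 : 0 ≤ (g - c) + (g - c) := by
      rw [show (g - c) + (g - c) = (g + g) - (c + c) from by ring]
      exact sub_nonneg.mpr (le_trans h5 h6)
    exact sub_nonneg.mp (half_nonneg_c h7)
  exact ⟨part1, part2, part3⟩
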